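/- arXiv:2111.03782 — 8 statements merged into one kernel-verified Lean document; each statement's English description precedes it below -/
import Mathlib

section
/- Let S, B, C be events in a probability space with C ⊆ B, P(Bᶜ) > 0 and P(B ∩ Cᶜ) > 0 (hence P(Cᶜ) > 0), and let e1, e2 ∈ [0,1]. If P(S | Bᶜ) ≤ e1 and P(S | B ∩ Cᶜ) ≤ e2, then P(S | Cᶜ) ≤ e1 + e2. (Interpretation: S is the safety event, B the event that the trace is explained by the system model, C ⊆ B the event that the trace is explained by the model under the verification assumption; the hypotheses say the model is safety-relevant up to e1 and the assumption is safety-relevant up to e2, and the conclusion bounds the chance of safety when the assumption fails.) -/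
open MeasureTheory ProbabilityTheory
open scoped ENNReal

/-- Theorem 1 (Bounded safety under failed assumptions): if the model is safety-relevant
up to `e1` (`P(S | Bᶜ) ≤ e1`) and the assumption is safety-relevant up to `e2`
(`P(S | B ∩ Cᶜ) ≤ e2`), then `P(S | Cᶜ) ≤ e1 + e2`. -/
theorem bounded_safety_under_failed_assumptions
    {Ω : Type*} [MeasurableSpace Ω] (μ : Measure Ω) [IsProbabilityMeasure μ]
    (S B C : Set Ω) (hS : MeasurableSet S) (hB : MeasurableSet B) (hC : MeasurableSet C)
    (hCB : C ⊆ B) (hBc : 0 < μ Bᶜ) (hBCc : 0 < μ (B ∩ Cᶜ))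
    (e1 e2 : ℝ) (he1 : e1 ∈ Set.Icc (0 : ℝ) 1) (he2 : e2 ∈ Set.Icc (0 : ℝ) 1)
    (h1 : (ProbabilityTheory.cond μ Bᶜ S).toReal ≤ e1)
    (h2 : (ProbabilityTheory.cond μ (B ∩ Cᶜ) S).toReal ≤ e2) :
    (ProbabilityTheory.cond μ Cᶜ S).toReal ≤ e1 + e2 := by
  have hB' : MeasurableSet Bᶜ := hB.compl
  have hBC : MeasurableSet (B ∩ Cᶜ) := hB.inter hC.compl
  have hC' : MeasurableSet Cᶜ := hC.compl
  -- real-valued measures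
  set a := (μ (Bᶜ ∩ S)).toReal with ha
  set b := (μ ((B ∩ Cᶜ) ∩ S)).toReal with hb
  set pB := (μ Bᶜ).toReal with hpB
  set pBC := (μ (B ∩ Cᶜ)).toReal with hpBC
  set pC := (μ Cᶜ).toReal with hpC
  have hpBpos : 0 < pB := ENNReal.toReal_pos hBc.ne' (measure_ne_top μ _)
  have hpBCpos : 0 < pBC := ENNReal.toReal_pos hBCc.ne' (measure_ne_top μ _)
  have hBsubC : Bᶜ ⊆ Cᶜ := Set.compl_subset_compl.mpr hCB
  have hBCsubC : B ∩ Cᶜ ⊆ Cᶜ := Set.inter_subset_right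
  have hpCpos : 0 < pC :=
    lt_of_lt_of_le hpBpos (ENNReal.toReal_le_toReal (measure_ne_top μ _)
      (measure_ne_top μ _) |>.mpr (measure_mono hBsubC))
  have hpBle : pB ≤ pC := (ENNReal.toReal_le_toReal (measure_ne_top μ _)
      (measure_ne_top μ _)).mpr (measure_mono hBsubC)
  have hpBCle : pBC ≤ pC := (ENNReal.toReal_le_toReal (measure_ne_top μ _)
      (measure_ne_top μ _)).mpr (measure_mono hBCsubC)
  -- rewrite conditional probabilities
  have hcond : ∀ (t : Set Ω), MeasurableSet t →
      (ProbabilityTheory.cond μ t S).toReal = (μ (t ∩ S)).toReal / (μ t).toReal := by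
    intro t ht
    rw [ProbabilityTheory.cond_apply ht, ENNReal.toReal_mul, ENNReal.toReal_inv,
      inv_mul_eq_div]
  rw [hcond _ hB'] at h1
  rw [hcond _ hBC] at h2
  rw [hcond _ hC']
  have h1' : a ≤ e1 * pB := by
    have := (div_le_iff₀ hpBpos).mp h1
    linarith
  have h2' : b ≤ e2 * pBC := by
    have := (div_le_iff₀ hpBCpos).mp h2
    linarith
  -- decomposition of Cᶜ ∩ S
  have hdecomp : Cᶜ ∩ S = (Bᶜ ∩ S) ∪ ((B ∩ Cᶜ) ∩ S) := by
    ext x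
    simp only [Set.mem_inter_iff, Set.mem_union, Set.mem_compl_iff]
    constructor
    · rintro ⟨hc, hs⟩
      by_cases hxb : x ∈ B
      · exact Or.inr ⟨⟨hxb, hc⟩, hs⟩
      · exact Or.inl ⟨hxb, hs⟩
    · rintro (⟨hxb, hs⟩ | ⟨⟨hxb, hc⟩, hs⟩)
      · exact ⟨fun hc => hxb (hCB hc), hs⟩
      · exact ⟨hc, hs⟩
  have hdisj : Disjoint (Bᶜ ∩ S) ((B ∩ Cᶜ) ∩ S) := by
    apply Set.disjoint_left.mpr
    rintro x ⟨hxb, -⟩ ⟨⟨hxb', -⟩, -⟩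
    exact hxb hxb'
  have hsum : (μ (Cᶜ ∩ S)).toReal = a + b := by
    rw [hdecomp, measure_union hdisj (hBC.inter hS), ENNReal.toReal_add
      (measure_ne_top μ _) (measure_ne_top μ _)]
  rw [hsum, div_le_iff₀ hpCpos]
  have he1' : 0 ≤ e1 := he1.1
  have he2' : 0 ≤ e2 := he2.1
  nlinarith [mul_le_mul_of_nonneg_left hpBle he1', mul_le_mul_of_nonneg_left hpBCle he2']
end

section
/- Let M1 and M_C be random variables with values in [0,1], A1 an event, and e1 ≥ 0. If MCE(M1, A1) ≤ e1 and the conditional independence A1 ⟂ M_C | M1 holds, then |P(A1 | σ(M_C)) − E[M1 | σ(M_C)]| ≤ e1 almost surely; in particular E[M1 | σ(M_C)] − e1 ≤ P(A1 | σ(M_C)) ≤ E[M1 | σ(M_C)] + e1 almost surely. -/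
open MeasureTheory ProbabilityTheory
open scoped ENNReal

/-- The sigma-algebra generated by a random variable. -/
def sigGen {Ω α : Type*} [MeasurableSpace α] (M : Ω → α) : MeasurableSpace Ω :=
  MeasurableSpace.comap M inferInstance

/-- Conditional probability of an event given a sub-sigma-algebra, as a random variable:
`P(A | 𝒢) = E[1_A | 𝒢]`. -/
noncomputable def cprob {Ω : Type*} [MeasurableSpace Ω] (μ : Measure Ω)
    (m : MeasurableSpace Ω) (A : Set Ω) : Ω → ℝ :=
  μ[A.indicator (fun _ => (1 : ℝ)) | m]

/-!
Conditioning the indicator of `A1` on the finer σ-algebra `σ(M1, M_C)` gives, by conditional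
independence, `P(A1 | σ(M1))`, which is within `e1` of `M1`. By the tower property,
`P(A1 | σ(M_C)) − E[M1 | σ(M_C)]` is the conditional expectation given `σ(M_C)` of that
difference, and conditional expectation preserves almost sure bounds.
-/

theorem sigGen_le_sigGen_prodMk {Ω β γ : Type*} [MeasurableSpace β] [MeasurableSpace γ]
    (X : Ω → β) (Y : Ω → γ) : sigGen Y ≤ sigGen (fun ω => (X ω, Y ω)) :=
  fun _ ⟨t, ht, hs⟩ => ⟨Prod.snd ⁻¹' t, measurable_snd ht, hs⟩

section CondExp

variable {Ω : Type*} {m₀ : MeasurableSpace Ω} {μ : Measure Ω}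

theorem ae_abs_condExp_sub_condExp_le {m m' : MeasurableSpace Ω} (hm : m ≤ m')
    (hm' : m' ≤ m₀) [SigmaFinite (μ.trim hm')] {f g : Ω → ℝ} (hg : Integrable g μ) {c : ℝ}
    (hfg : ∀ᵐ ω ∂μ, |μ[f | m'] ω - g ω| ≤ c) :
    ∀ᵐ ω ∂μ, |μ[f | m] ω - μ[g | m] ω| ≤ c := by
  have htower : μ[μ[f | m'] | m] =ᵐ[μ] μ[f | m] := condExp_condExp_of_le hm hm'
  have hsub : μ[μ[f | m'] - g | m] =ᵐ[μ] μ[μ[f | m'] | m] - μ[g | m] :=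
    condExp_sub integrable_condExp hg m
  have hbound : ∀ᵐ ω ∂μ, |μ[μ[f | m'] - g | m] ω| ≤ c :=
    ae_bdd_abs_condExp_of_ae_bdd_abs (f := μ[f | m'] - g) hfg
  filter_upwards [hbound, htower, hsub] with ω hω htower hsub
  rwa [hsub, Pi.sub_apply, htower] at hω

end CondExp

theorem conditional_assumption_bound_general
    {Ω : Type*} [MeasurableSpace Ω] (μ : Measure Ω) [IsProbabilityMeasure μ]
    (M1 MC : Ω → ℝ) (hM1 : Measurable M1) (hMC : Measurable MC)
    (hM1r : ∀ ω, M1 ω ∈ Set.Icc (0 : ℝ) 1)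
    (A1 : Set Ω) (e1 : ℝ)
    (hMCE : ∀ᵐ ω ∂μ, |cprob μ (sigGen M1) A1 ω - M1 ω| ≤ e1)
    (hCI : cprob μ (sigGen (fun ω => (M1 ω, MC ω))) A1 =ᵐ[μ] cprob μ (sigGen M1) A1) :
    (∀ᵐ ω ∂μ, |cprob μ (sigGen MC) A1 ω - (μ[M1 | sigGen MC]) ω| ≤ e1) ∧
    (∀ᵐ ω ∂μ, (μ[M1 | sigGen MC]) ω - e1 ≤ cprob μ (sigGen MC) A1 ω ∧
      cprob μ (sigGen MC) A1 ω ≤ (μ[M1 | sigGen MC]) ω + e1) := by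
  have hM1int : Integrable M1 μ := .of_mem_Icc 0 1 hM1.aemeasurable (ae_of_all _ hM1r)
  have hfine : ∀ᵐ ω ∂μ, |cprob μ (sigGen (fun ω => (M1 ω, MC ω))) A1 ω - M1 ω| ≤ e1 := by
    filter_upwards [hCI, hMCE] with ω hCI hMCE
    rwa [hCI]
  have hpair : sigGen (fun ω => (M1 ω, MC ω)) ≤ ‹MeasurableSpace Ω› :=
    (hM1.prodMk hMC).comap_le
  have hbound : ∀ᵐ ω ∂μ, |cprob μ (sigGen MC) A1 ω - (μ[M1 | sigGen MC]) ω| ≤ e1 :=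
    ae_abs_condExp_sub_condExp_le (sigGen_le_sigGen_prodMk M1 MC) hpair hM1int hfine
  refine ⟨hbound, ?_⟩
  filter_upwards [hbound] with ω hω
  rw [abs_le] at hω
  constructor <;> linarith [hω.1, hω.2]

/-- Lemma 4.1 (Conditional Assumption Bounds), per-monitor: if `MCE(M1, A1) ≤ e1` and
`A1 ⟂ M_C | M1`, then `|P(A1 | σ(M_C)) − E[M1 | σ(M_C)]| ≤ e1` a.s.; in particular
`E[M1 | σ(M_C)] − e1 ≤ P(A1 | σ(M_C)) ≤ E[M1 | σ(M_C)] + e1` a.s. -/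
theorem conditional_assumption_bound
    {Ω : Type*} [MeasurableSpace Ω] (μ : Measure Ω) [IsProbabilityMeasure μ]
    (M1 MC : Ω → ℝ) (hM1 : Measurable M1) (hMC : Measurable MC)
    (hM1r : ∀ ω, M1 ω ∈ Set.Icc (0 : ℝ) 1) (hMCr : ∀ ω, MC ω ∈ Set.Icc (0 : ℝ) 1)
    (A1 : Set Ω) (hA1 : MeasurableSet A1) (e1 : ℝ) (he1 : 0 ≤ e1)
    (hMCE : ∀ᵐ ω ∂μ, |cprob μ (sigGen M1) A1 ω - M1 ω| ≤ e1)
    (hCI : cprob μ (sigGen (fun ω => (M1 ω, MC ω))) A1 =ᵐ[μ] cprob μ (sigGen M1) A1) :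
    (∀ᵐ ω ∂μ, |cprob μ (sigGen MC) A1 ω - (μ[M1 | sigGen MC]) ω| ≤ e1) ∧
    (∀ᵐ ω ∂μ, (μ[M1 | sigGen MC]) ω - e1 ≤ cprob μ (sigGen MC) A1 ω ∧
      cprob μ (sigGen MC) A1 ω ≤ (μ[M1 | sigGen MC]) ω + e1) :=
  conditional_assumption_bound_general μ M1 MC hM1 hMC hM1r A1 e1 hMCE hCI
end

section
/- Let M1, M2 be random variables with values in [0,1], set M_C := M1 · M2, let A1, A2 be events and e1, e2 ≥ 0. Assume: MCE(M1, A1) ≤ e1 and MCE(M2, A2) ≤ e2; the conditional independences A1 ⟂ A2 | M_C, A1 ⟂ M_C | M1, and A2 ⟂ M_C | M2 hold; and Var(M1 | σ(M_C)) ≤ Var(M1) and Var(M2 | σ(M_C)) ≤ Var(M2) almost surely. Then the expected calibration error of the product composition with respect to the conjunction satisfies ECE(M1·M2, A1 ∩ A2) = E[ |P(A1 ∩ A2 | σ(M_C)) − M_C| ] ≤ max( 4·e1·e2 , √(Var(M1)·Var(M2)) + e1 + e2 + e1·e2 ). -/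
open MeasureTheory ProbabilityTheory
open scoped ENNReal

/-- Conditional variance of a real random variable given a sub-sigma-algebra:
`Var(X | 𝒢) = E[(X − E[X | 𝒢])² | 𝒢]`. -/
noncomputable def condVar {Ω : Type*} [MeasurableSpace Ω] (μ : Measure Ω)
    (m : MeasurableSpace Ω) (X : Ω → ℝ) : Ω → ℝ :=
  μ[fun ω => (X ω - (μ[X | m]) ω) ^ 2 | m]

/-!
The conditional independence `A₁ ⟂ A₂ | M_C` factors `P(A₁ ∩ A₂ | M_C)` as `p₁ p₂` with
`pᵢ = P(Aᵢ | M_C)`. By the tower property and `Aᵢ ⟂ M_C | Mᵢ`, `pᵢ = E[P(Aᵢ | Mᵢ) | M_C]`, so the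
calibration of `Mᵢ` gives `|pᵢ - E[Mᵢ | M_C]| ≤ eᵢ`. Since `M_C = E[M₁ M₂ | M_C]`, the conditional
Cauchy–Schwarz inequality bounds `|M_C - E[M₁ | M_C] E[M₂ | M_C]|` by the geometric mean of the
conditional variances, hence by `√(Var M₁ · Var M₂)`. Expanding `p₁ p₂ - M_C` around the conditional
means bounds it pointwise by `√(Var M₁ · Var M₂) + e₁ + e₂ + e₁ e₂`.
-/

lemma sq_le_mul_of_forall_rat_quadratic_nonneg {a b c : ℝ}
    (h : ∀ q : ℚ, 0 ≤ a + 2 * b * q + c * q ^ 2) : b ^ 2 ≤ a * c := by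
  have hreal (t : ℝ) : 0 ≤ c * (t * t) + 2 * b * t + a := by
    refine Rat.denseRange_cast.induction_on t (isClosed_le continuous_const (by fun_prop))
      fun q => ?_
    linarith [h q]
  have := discrim_le_zero hreal
  rw [discrim] at this
  linarith

namespace ProbabilityTheory

variable {Ω : Type*} {m m₀ : MeasurableSpace Ω} {μ : Measure[m₀] Ω} {f g : Ω → ℝ}

/-- Conditional Cauchy–Schwarz inequality. -/
lemma sq_condExp_mul_le (hf : MemLp f 2 μ) (hg : MemLp g 2 μ) :
    ∀ᵐ ω ∂μ, (μ[f * g | m] ω) ^ 2 ≤ μ[f ^ 2 | m] ω * μ[g ^ 2 | m] ω := by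
  have hfg : Integrable (f * g) μ := hf.integrable_mul hg
  have hf2 : Integrable (f ^ 2) μ := hf.integrable_sq
  have hg2 : Integrable (g ^ 2) μ := hg.integrable_sq
  -- Only countably many `q`, so that the exceptional null sets can be collected.
  have hquad (q : ℚ) :
      ∀ᵐ ω ∂μ, 0 ≤ μ[f ^ 2 | m] ω + 2 * μ[f * g | m] ω * q + μ[g ^ 2 | m] ω * q ^ 2 := by
    have hexpand :
        (f + (q : ℝ) • g) ^ 2 = f ^ 2 + ((2 : ℝ) * q) • (f * g) + ((q : ℝ) ^ 2) • g ^ 2 := by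
      ext ω
      simp only [Pi.add_apply, Pi.pow_apply, Pi.smul_apply, Pi.mul_apply, smul_eq_mul]
      ring
    have hnonneg : 0 ≤ᵐ[μ] μ[(f + (q : ℝ) • g) ^ 2 | m] :=
      condExp_nonneg (.of_forall fun ω => sq_nonneg _)
    rw [hexpand] at hnonneg
    filter_upwards [hnonneg,
      condExp_add (m := m) (hf2.add (hfg.smul ((2 : ℝ) * q))) (hg2.smul ((q : ℝ) ^ 2)),
      condExp_add (m := m) hf2 (hfg.smul ((2 : ℝ) * q)),
      condExp_smul (m := m) ((2 : ℝ) * q) (f * g), condExp_smul (m := m) ((q : ℝ) ^ 2) (g ^ 2)]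
      with ω hω hadd₁ hadd₂ hsmul₁ hsmul₂
    simp only [Pi.add_apply, Pi.smul_apply, smul_eq_mul, Pi.zero_apply] at *
    rw [hadd₁, hadd₂, hsmul₁, hsmul₂] at hω
    linarith
  filter_upwards [ae_all_iff.2 hquad] with ω hω
  exact sq_le_mul_of_forall_rat_quadratic_nonneg hω

lemma condExp_sub_condExp_mul_sub_condExp [IsFiniteMeasure μ] (hm : m ≤ m₀)
    (hf : MemLp f 2 μ) (hg : MemLp g 2 μ) :
    μ[(f - μ[f | m]) * (g - μ[g | m]) | m] =ᵐ[μ] μ[f * g | m] - μ[f | m] * μ[g | m] := by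
  have hF : MemLp (μ[f | m]) 2 μ := hf.condExp one_le_two
  have hG : MemLp (μ[g | m]) 2 μ := hg.condExp one_le_two
  have hexpand : (f - μ[f | m]) * (g - μ[g | m])
      = f * g - μ[f | m] * g - f * μ[g | m] + μ[f | m] * μ[g | m] := by ring
  rw [hexpand]
  have hfg : Integrable (f * g) μ := hf.integrable_mul hg
  have hFg : Integrable (μ[f | m] * g) μ := hF.integrable_mul hg
  have hfG : Integrable (f * μ[g | m]) μ := hf.integrable_mul hG
  filter_upwards [condExp_add (m := m) ((hfg.sub hFg).sub hfG) (hF.integrable_mul hG),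
    condExp_sub (m := m) (hfg.sub hFg) hfG, condExp_sub (m := m) hfg hFg,
    condExp_mul_of_stronglyMeasurable_left stronglyMeasurable_condExp hFg
      (hg.integrable one_le_two),
    condExp_mul_of_stronglyMeasurable_right stronglyMeasurable_condExp hfG
      (hf.integrable one_le_two)] with ω hadd hsub₁ hsub₂ hpull₁ hpull₂
  have hFG : μ[μ[f | m] * μ[g | m] | m] = μ[f | m] * μ[g | m] :=
    condExp_of_stronglyMeasurable hm (stronglyMeasurable_condExp.mul stronglyMeasurable_condExp)
      (hF.integrable_mul hG)
  simp only [Pi.add_apply, Pi.sub_apply, Pi.mul_apply, hFG] at *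
  rw [hadd, hsub₁, hsub₂, hpull₁, hpull₂]
  ring

lemma sq_condExp_mul_sub_le_condVar_mul [IsFiniteMeasure μ] (hm : m ≤ m₀)
    (hf : MemLp f 2 μ) (hg : MemLp g 2 μ) :
    ∀ᵐ ω ∂μ, (μ[f * g | m] ω - μ[f | m] ω * μ[g | m] ω) ^ 2 ≤
      Var[f; μ | m] ω * Var[g; μ | m] ω := by
  filter_upwards [sq_condExp_mul_le (m := m) (hf.sub (hf.condExp one_le_two))
      (hg.sub (hg.condExp one_le_two)), condExp_sub_condExp_mul_sub_condExp hm hf hg]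
    with ω hcs hcov
  rwa [hcov] at hcs

lemma abs_condExp_mul_sub_le_sqrt_variance_mul [IsFiniteMeasure μ] (hm : m ≤ m₀)
    (hf : MemLp f 2 μ) (hg : MemLp g 2 μ)
    (hVf : ∀ᵐ ω ∂μ, Var[f; μ | m] ω ≤ Var[f; μ]) (hVg : ∀ᵐ ω ∂μ, Var[g; μ | m] ω ≤ Var[g; μ]) :
    ∀ᵐ ω ∂μ, |μ[f * g | m] ω - μ[f | m] ω * μ[g | m] ω| ≤ √(Var[f; μ] * Var[g; μ]) := by
  have hg₀ : 0 ≤ᵐ[μ] Var[g; μ | m] := condExp_nonneg (.of_forall fun ω => sq_nonneg _)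
  filter_upwards [sq_condExp_mul_sub_le_condVar_mul hm hf hg, hVf, hVg, hg₀]
    with ω hcs hf' hg' hg₀
  exact Real.abs_le_sqrt (hcs.trans (mul_le_mul hf' hg' hg₀ (variance_nonneg f μ)))

lemma abs_condExp_sub_condExp_le (hf : Integrable f μ) (hg : Integrable g μ) {e : ℝ}
    (h : ∀ᵐ ω ∂μ, |f ω - g ω| ≤ e) :
    ∀ᵐ ω ∂μ, |μ[f | m] ω - μ[g | m] ω| ≤ e := by
  filter_upwards [condExp_sub (m := m) hf hg,
    ae_bdd_abs_condExp_of_ae_bdd_abs (m := m) (f := f - g) h] with ω hsub hbdd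
  rwa [hsub] at hbdd

end ProbabilityTheory

/-- The tower property, with `A ⟂ N | M` in the form `P(A | M, N) = P(A | M)`. -/
lemma cprob_ae_eq_condExp_cprob_of_condIndep {Ω α β : Type*} [MeasurableSpace Ω]
    [MeasurableSpace α] [MeasurableSpace β] {μ : Measure Ω} [IsFiniteMeasure μ]
    {M : Ω → α} {N : Ω → β} (hM : Measurable M) (hN : Measurable N) {A : Set Ω}
    (hA : cprob μ (sigGen fun ω => (M ω, N ω)) A =ᵐ[μ] cprob μ (sigGen M) A) :
    cprob μ (sigGen N) A =ᵐ[μ] μ[cprob μ (sigGen M) A | sigGen N] := by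
  have hle : sigGen N ≤ sigGen fun ω => (M ω, N ω) :=
    (comap_measurable fun ω => (M ω, N ω)).snd.comap_le
  have hpair : sigGen (fun ω => (M ω, N ω)) ≤ ‹MeasurableSpace Ω› := (hM.prodMk hN).comap_le
  exact (condExp_condExp_of_le hle hpair).symm.trans (condExp_congr_ae hA)

lemma abs_cprob_sub_condExp_le_of_condIndep {Ω β : Type*} [MeasurableSpace Ω]
    [MeasurableSpace β] {μ : Measure Ω} [IsFiniteMeasure μ] {M : Ω → ℝ} {N : Ω → β}
    (hM : Measurable M) (hN : Measurable N) (hMi : Integrable M μ) {A : Set Ω} {e : ℝ}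
    (hcal : ∀ᵐ ω ∂μ, |cprob μ (sigGen M) A ω - M ω| ≤ e)
    (hA : cprob μ (sigGen fun ω => (M ω, N ω)) A =ᵐ[μ] cprob μ (sigGen M) A) :
    ∀ᵐ ω ∂μ, |cprob μ (sigGen N) A ω - μ[M | sigGen N] ω| ≤ e := by
  filter_upwards [cprob_ae_eq_condExp_cprob_of_condIndep hM hN hA,
    abs_condExp_sub_condExp_le integrable_condExp hMi hcal] with ω htower hdev
  rwa [htower]

lemma abs_mul_sub_le_of_abs_sub_le {p₁ p₂ m₁ m₂ c e₁ e₂ s : ℝ} (h₁ : |p₁ - m₁| ≤ e₁)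
    (h₂ : |p₂ - m₂| ≤ e₂) (hm₁ : |m₁| ≤ 1) (hm₂ : |m₂| ≤ 1) (hc : |c - m₁ * m₂| ≤ s) :
    |p₁ * p₂ - c| ≤ s + e₁ + e₂ + e₁ * e₂ := by
  have hsplit : p₁ * p₂ - c =
      (m₁ * m₂ - c) + (p₁ - m₁) * m₂ + m₁ * (p₂ - m₂) + (p₁ - m₁) * (p₂ - m₂) := by ring
  have hcross₁ : |p₁ - m₁| * |m₂| ≤ e₁ := by
    simpa using mul_le_mul h₁ hm₂ (abs_nonneg _) ((abs_nonneg _).trans h₁)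
  have hcross₂ : |m₁| * |p₂ - m₂| ≤ e₂ := by
    simpa using mul_le_mul hm₁ h₂ (abs_nonneg _) zero_le_one
  have hboth : |p₁ - m₁| * |p₂ - m₂| ≤ e₁ * e₂ :=
    mul_le_mul h₁ h₂ (abs_nonneg _) ((abs_nonneg _).trans h₁)
  calc |p₁ * p₂ - c|
      ≤ |m₁ * m₂ - c| + |p₁ - m₁| * |m₂| + |m₁| * |p₂ - m₂| + |p₁ - m₁| * |p₂ - m₂| := by
        rw [hsplit, ← abs_mul, ← abs_mul, ← abs_mul]
        exact (abs_add_le _ _).trans (add_le_add_left ((abs_add_le _ _).trans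
          (add_le_add_left (abs_add_le _ _) _)) _)
    _ ≤ s + e₁ + e₂ + e₁ * e₂ := by
      rw [abs_sub_comm] at hc
      linarith

theorem ece_product_bound_general
    {Ω : Type*} [MeasurableSpace Ω] (μ : Measure Ω) [IsProbabilityMeasure μ]
    (M1 M2 MC : Ω → ℝ) (hM1 : Measurable M1) (hM2 : Measurable M2)
    (hM1r : ∀ ω, M1 ω ∈ Set.Icc (0 : ℝ) 1) (hM2r : ∀ ω, M2 ω ∈ Set.Icc (0 : ℝ) 1)
    (hMCdef : MC = fun ω => M1 ω * M2 ω)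
    (A1 A2 : Set Ω)
    (e1 e2 : ℝ)
    (hMCE1 : ∀ᵐ ω ∂μ, |cprob μ (sigGen M1) A1 ω - M1 ω| ≤ e1)
    (hMCE2 : ∀ᵐ ω ∂μ, |cprob μ (sigGen M2) A2 ω - M2 ω| ≤ e2)
    (hCIA : cprob μ (sigGen MC) (A1 ∩ A2) =ᵐ[μ]
      fun ω => cprob μ (sigGen MC) A1 ω * cprob μ (sigGen MC) A2 ω)
    (hCI1 : cprob μ (sigGen (fun ω => (M1 ω, MC ω))) A1 =ᵐ[μ] cprob μ (sigGen M1) A1)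
    (hCI2 : cprob μ (sigGen (fun ω => (M2 ω, MC ω))) A2 =ᵐ[μ] cprob μ (sigGen M2) A2)
    (hVar1 : ∀ᵐ ω ∂μ, condVar μ (sigGen MC) M1 ω ≤ variance M1 μ)
    (hVar2 : ∀ᵐ ω ∂μ, condVar μ (sigGen MC) M2 ω ≤ variance M2 μ) :
    ∫ ω, |cprob μ (sigGen MC) (A1 ∩ A2) ω - MC ω| ∂μ ≤
      max (4 * e1 * e2)
        (Real.sqrt (variance M1 μ * variance M2 μ) + e1 + e2 + e1 * e2) := by
  have hMC : Measurable MC := hMCdef ▸ hM1.mul hM2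
  have hprod : M1 * M2 = MC := hMCdef ▸ rfl
  have habs {M : Ω → ℝ} (hMr : ∀ ω, M ω ∈ Set.Icc (0 : ℝ) 1) (ω : Ω) : |M ω| ≤ 1 :=
    (abs_of_nonneg (hMr ω).1).trans_le (hMr ω).2
  have hL2 {M : Ω → ℝ} (hM : Measurable M) (hMr : ∀ ω, M ω ∈ Set.Icc (0 : ℝ) 1) :
      MemLp M 2 μ :=
    .of_bound hM.aestronglyMeasurable 1 (.of_forall fun ω => by simpa using habs hMr ω)
  have hMCi : Integrable MC μ := hprod ▸ (hL2 hM1 hM1r).integrable_mul (hL2 hM2 hM2r)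
  have hcov := abs_condExp_mul_sub_le_sqrt_variance_mul hMC.comap_le (hL2 hM1 hM1r)
    (hL2 hM2 hM2r) hVar1 hVar2
  rw [hprod, condExp_of_stronglyMeasurable hMC.comap_le
    (comap_measurable MC).stronglyMeasurable hMCi] at hcov
  have hpointwise : ∀ᵐ ω ∂μ, |cprob μ (sigGen MC) (A1 ∩ A2) ω - MC ω| ≤
      Real.sqrt (variance M1 μ * variance M2 μ) + e1 + e2 + e1 * e2 := by
    filter_upwards [hCIA, hcov,
      abs_cprob_sub_condExp_le_of_condIndep hM1 hMC ((hL2 hM1 hM1r).integrable one_le_two)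
        hMCE1 hCI1,
      abs_cprob_sub_condExp_le_of_condIndep hM2 hMC ((hL2 hM2 hM2r).integrable one_le_two)
        hMCE2 hCI2,
      ae_bdd_abs_condExp_of_ae_bdd_abs (m := sigGen MC) (.of_forall (habs hM1r)),
      ae_bdd_abs_condExp_of_ae_bdd_abs (m := sigGen MC) (.of_forall (habs hM2r))]
      with ω hindep hc h₁ h₂ hm₁ hm₂
    rw [hindep]
    exact abs_mul_sub_le_of_abs_sub_le h₁ h₂ hm₁ hm₂ hc
  calc ∫ ω, |cprob μ (sigGen MC) (A1 ∩ A2) ω - MC ω| ∂μ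
      ≤ ∫ _, Real.sqrt (variance M1 μ * variance M2 μ) + e1 + e2 + e1 * e2 ∂μ :=
        integral_mono_ae (integrable_condExp.sub hMCi).abs (integrable_const _) hpointwise
    _ = Real.sqrt (variance M1 μ * variance M2 μ) + e1 + e2 + e1 * e2 := by simp
    _ ≤ _ := le_max_right _ _

/-- Theorem 4.2 (ECE bound for product composition):
`ECE(M1·M2, A1 ∧ A2) ≤ max(4·e1·e2, √(Var(M1)·Var(M2)) + e1 + e2 + e1·e2)`. -/
theorem ece_product_bound
    {Ω : Type*} [MeasurableSpace Ω] (μ : Measure Ω) [IsProbabilityMeasure μ]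
    (M1 M2 MC : Ω → ℝ) (hM1 : Measurable M1) (hM2 : Measurable M2)
    (hM1r : ∀ ω, M1 ω ∈ Set.Icc (0 : ℝ) 1) (hM2r : ∀ ω, M2 ω ∈ Set.Icc (0 : ℝ) 1)
    (hMCdef : MC = fun ω => M1 ω * M2 ω)
    (A1 A2 : Set Ω) (hA1 : MeasurableSet A1) (hA2 : MeasurableSet A2)
    (e1 e2 : ℝ) (he1 : 0 ≤ e1) (he2 : 0 ≤ e2)
    (hMCE1 : ∀ᵐ ω ∂μ, |cprob μ (sigGen M1) A1 ω - M1 ω| ≤ e1)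
    (hMCE2 : ∀ᵐ ω ∂μ, |cprob μ (sigGen M2) A2 ω - M2 ω| ≤ e2)
    (hCIA : cprob μ (sigGen MC) (A1 ∩ A2) =ᵐ[μ]
      fun ω => cprob μ (sigGen MC) A1 ω * cprob μ (sigGen MC) A2 ω)
    (hCI1 : cprob μ (sigGen (fun ω => (M1 ω, MC ω))) A1 =ᵐ[μ] cprob μ (sigGen M1) A1)
    (hCI2 : cprob μ (sigGen (fun ω => (M2 ω, MC ω))) A2 =ᵐ[μ] cprob μ (sigGen M2) A2)
    (hVar1 : ∀ᵐ ω ∂μ, condVar μ (sigGen MC) M1 ω ≤ variance M1 μ)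
    (hVar2 : ∀ᵐ ω ∂μ, condVar μ (sigGen MC) M2 ω ≤ variance M2 μ) :
    ∫ ω, |cprob μ (sigGen MC) (A1 ∩ A2) ω - MC ω| ∂μ ≤
      max (4 * e1 * e2)
        (Real.sqrt (variance M1 μ * variance M2 μ) + e1 + e2 + e1 * e2) :=
  ece_product_bound_general μ M1 M2 MC hM1 hM2 hM1r hM2r hMCdef A1 A2 e1 e2 hMCE1 hMCE2 hCIA hCI1
    hCI2 hVar1 hVar2
end

section
/- Let M1, M2 be random variables with values in [0,1], set M_C := M1 · M2, let A1, A2 be events and e1, e2 ∈ [0,1]. Assume: MCE(M1, A1) ≤ e1 and MCE(M2, A2) ≤ e2; and the conditional independences A1 ⟂ A2 | M_C, A1 ⟂ M_C | M1, and A2 ⟂ M_C | M2 hold. Then almost surely M_C − P(A1 ∩ A2 | σ(M_C)) is at most (e1² − 2·e1·(e2 − 1) + (1 + e2)²)/4 if e1 + e2 ≤ 1, and at most e1 + e2 − e1·e2 otherwise. That is, the conservatism error of the product composition with respect to the conjunction is bounded by this piecewise quantity. -/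
open MeasureTheory ProbabilityTheory
open scoped ENNReal

lemma cprob_nonneg {Ω : Type*} [MeasurableSpace Ω] (μ : Measure Ω)
    (M : Ω → ℝ) (A : Set Ω) : 0 ≤ᵐ[μ] cprob μ (sigGen M) A :=
  condExp_nonneg (Filter.Eventually.of_forall fun ω =>
    Set.indicator_nonneg (fun _ _ => zero_le_one) ω)

/-- Key lower bound: `P(A | σ(M_C)) ≥ M_C − e` a.e. -/
lemma cprob_lower {Ω : Type*} [MeasurableSpace Ω] (μ : Measure Ω) [IsProbabilityMeasure μ]
    (M MC : Ω → ℝ) (hM : Measurable M) (hMC : Measurable MC)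
    (hMCr : ∀ ω, MC ω ∈ Set.Icc (0 : ℝ) 1) (hle : ∀ ω, MC ω ≤ M ω)
    (A : Set Ω) (e : ℝ)
    (hMCE : ∀ᵐ ω ∂μ, |cprob μ (sigGen M) A ω - M ω| ≤ e)
    (hCI : cprob μ (sigGen (fun ω => (M ω, MC ω))) A =ᵐ[μ] cprob μ (sigGen M) A) :
    ∀ᵐ ω ∂μ, MC ω - e ≤ cprob μ (sigGen MC) A ω := by
  have hmMC : sigGen MC ≤ ‹MeasurableSpace Ω› := hMC.comap_le
  have hmpair : sigGen (fun ω => (M ω, MC ω)) ≤ ‹MeasurableSpace Ω› :=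
    (hM.prodMk hMC).comap_le
  have hle_pair : sigGen MC ≤ sigGen (fun ω => (M ω, MC ω)) := by
    have h : MC = (fun p : ℝ × ℝ => p.2) ∘ fun ω => (M ω, MC ω) := rfl
    rw [sigGen, sigGen, h, ← MeasurableSpace.comap_comp]
    exact MeasurableSpace.comap_mono measurable_snd.comap_le
  have key : cprob μ (sigGen MC) A =ᵐ[μ] μ[cprob μ (sigGen M) A | sigGen MC] :=
    ((condExp_condExp_of_le hle_pair hmpair).symm.trans (condExp_congr_ae hCI))
  have hMCint : Integrable MC μ := by
    refine (integrable_const (1 : ℝ)).mono' hMC.aestronglyMeasurable ?_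
    filter_upwards with ω
    rw [Real.norm_eq_abs, abs_le]
    exact ⟨by linarith [(hMCr ω).1], (hMCr ω).2⟩
  have hgint : Integrable (fun ω => MC ω - e) μ := hMCint.sub (integrable_const e)
  have hptwise : (fun ω => MC ω - e) ≤ᵐ[μ] cprob μ (sigGen M) A := by
    filter_upwards [hMCE] with ω h
    have h1 := (abs_le.mp h).1
    have h2 := hle ω
    linarith
  have hmono := condExp_mono (m := sigGen MC) hgint integrable_condExp hptwise
  have hMCm : @Measurable Ω ℝ (sigGen MC) _ MC := measurable_iff_comap_le.mpr le_rfl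
  have hself : μ[(fun ω => MC ω - e) | sigGen MC] = fun ω => MC ω - e :=
    condExp_of_stronglyMeasurable hmMC
      ((hMCm.sub measurable_const).stronglyMeasurable) hgint
  filter_upwards [key, hmono] with ω hk hm2
  rw [hself] at hm2
  rw [hk]
  exact hm2

/-- Corollary 4.5 (CCE bound for product composition): a.s. the conservatism error
`M_C − P(A1 ∧ A2 | σ(M_C))` is at most `(e1² − 2·e1·(e2 − 1) + (1 + e2)²)/4` when
`e1 + e2 ≤ 1`, and at most `e1 + e2 − e1·e2` otherwise. -/
theorem cce_product_bound
    {Ω : Type*} [MeasurableSpace Ω] (μ : Measure Ω) [IsProbabilityMeasure μ]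
    (M1 M2 MC : Ω → ℝ) (hM1 : Measurable M1) (hM2 : Measurable M2)
    (hM1r : ∀ ω, M1 ω ∈ Set.Icc (0 : ℝ) 1) (hM2r : ∀ ω, M2 ω ∈ Set.Icc (0 : ℝ) 1)
    (hMCdef : MC = fun ω => M1 ω * M2 ω)
    (A1 A2 : Set Ω) (hA1 : MeasurableSet A1) (hA2 : MeasurableSet A2)
    (e1 e2 : ℝ) (he1 : e1 ∈ Set.Icc (0 : ℝ) 1) (he2 : e2 ∈ Set.Icc (0 : ℝ) 1)
    (hMCE1 : ∀ᵐ ω ∂μ, |cprob μ (sigGen M1) A1 ω - M1 ω| ≤ e1)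
    (hMCE2 : ∀ᵐ ω ∂μ, |cprob μ (sigGen M2) A2 ω - M2 ω| ≤ e2)
    (hCIA : cprob μ (sigGen MC) (A1 ∩ A2) =ᵐ[μ]
      fun ω => cprob μ (sigGen MC) A1 ω * cprob μ (sigGen MC) A2 ω)
    (hCI1 : cprob μ (sigGen (fun ω => (M1 ω, MC ω))) A1 =ᵐ[μ] cprob μ (sigGen M1) A1)
    (hCI2 : cprob μ (sigGen (fun ω => (M2 ω, MC ω))) A2 =ᵐ[μ] cprob μ (sigGen M2) A2) :
    ∀ᵐ ω ∂μ, MC ω - cprob μ (sigGen MC) (A1 ∩ A2) ω ≤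
      if e1 + e2 ≤ 1 then (e1 ^ 2 - 2 * e1 * (e2 - 1) + (1 + e2) ^ 2) / 4
      else e1 + e2 - e1 * e2 := by
  have hMC : Measurable MC := by rw [hMCdef]; exact hM1.mul hM2
  have hMCr : ∀ ω, MC ω ∈ Set.Icc (0 : ℝ) 1 := by
    intro ω
    rw [hMCdef]
    exact ⟨mul_nonneg (hM1r ω).1 (hM2r ω).1,
      mul_le_one₀ (hM1r ω).2 (hM2r ω).1 (hM2r ω).2⟩
  have hle1 : ∀ ω, MC ω ≤ M1 ω := by
    intro ω; rw [hMCdef]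
    exact mul_le_of_le_one_right (hM1r ω).1 (hM2r ω).2
  have hle2 : ∀ ω, MC ω ≤ M2 ω := by
    intro ω; rw [hMCdef]
    exact mul_le_of_le_one_left (hM2r ω).1 (hM1r ω).2
  have c1 := cprob_lower μ M1 MC hM1 hMC hMCr hle1 A1 e1 hMCE1 hCI1
  have c2 := cprob_lower μ M2 MC hM2 hMC hMCr hle2 A2 e2 hMCE2 hCI2
  have n1 := cprob_nonneg μ MC A1
  have n2 := cprob_nonneg μ MC A2
  filter_upwards [hCIA, c1, c2, n1, n2] with ω hprod h1 h2 hn1 hn2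
  rw [hprod]
  set x := MC ω with hxdef
  set p1 := cprob μ (sigGen MC) A1 ω
  set p2 := cprob μ (sigGen MC) A2 ω
  have hx0 : (0 : ℝ) ≤ x := (hMCr ω).1
  have hx1' : x ≤ 1 := (hMCr ω).2
  simp only [Pi.zero_apply] at hn1 hn2
  split_ifs with hcase
  · by_cases hxe1 : x ≤ e1
    · nlinarith [mul_nonneg hn1 hn2, sq_nonneg (1 - e1 + e2)]
    · by_cases hxe2 : x ≤ e2
      · nlinarith [mul_nonneg hn1 hn2, sq_nonneg (1 + e1 - e2)]
      · have hp : (x - e1) * (x - e2) ≤ p1 * p2 :=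
          mul_le_mul h1 h2 (by linarith) hn1
        nlinarith [sq_nonneg (2 * x - 1 - e1 - e2)]
  · by_cases hxe1 : x ≤ e1
    · nlinarith [mul_nonneg hn1 hn2, mul_nonneg he2.1 (sub_nonneg.mpr he1.2)]
    · by_cases hxe2 : x ≤ e2
      · nlinarith [mul_nonneg hn1 hn2, mul_nonneg he1.1 (sub_nonneg.mpr he2.2)]
      · have hp : (x - e1) * (x - e2) ≤ p1 * p2 :=
          mul_le_mul h1 h2 (by linarith) hn1
        nlinarith [mul_nonneg (sub_nonneg.mpr hx1')
          (by linarith : (0 : ℝ) ≤ e1 + e2 - x)]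
end

section
/- Let S (the safety event) and A (the event that the sufficient verification assumption holds) be events, let M_C be a random variable with values in [0,1], and let e1, e2, e3 ≥ 0. Assume: (i) P(A ∩ Sᶜ) = 0 (sufficiency of the assumption: when A holds the system is safe, up to a null set); (ii) P(Aᶜ) > 0 and P(S | Aᶜ) ≤ e1 + e2 (the bound on the safety chance under violated assumptions, obtained from safety relevance of the model up to e1 and of the assumption up to e2); (iii) ECE(M_C, A) ≤ e3. Then ECE(M_C, S) ≤ e1 + e2 + e3. -/
open MeasureTheory ProbabilityTheory
open scoped ENNReal

/-!
Triangle inequality in `L¹`: `ECE(M, S) ≤ ‖P(S | σ(M)) - P(A | σ(M))‖₁ + ECE(M, A)`. Conditional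
expectation is an `L¹` contraction, so the first term is at most `‖1_S - 1_A‖₁ = P(S ∆ A)`.
Sufficiency makes `A \ S` null, leaving `P(S ∩ Aᶜ) = P(S | Aᶜ) P(Aᶜ) ≤ P(S | Aᶜ) ≤ e1 + e2`.
-/

open scoped symmDiff

section

variable {Ω : Type*} [MeasurableSpace Ω] {μ : Measure Ω}

lemma integral_abs_sub_le_integral_abs_sub_add {f g h : Ω → ℝ} (hf : Integrable f μ)
    (hg : Integrable g μ) (hh : Integrable h μ) :
    ∫ ω, |f ω - h ω| ∂μ ≤ ∫ ω, |f ω - g ω| ∂μ + ∫ ω, |g ω - h ω| ∂μ := by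
  refine (integral_mono (hf.sub hh).abs ((hf.sub hg).abs.add (hg.sub hh).abs)
    fun ω => abs_sub_le (f ω) (g ω) (h ω)).trans_eq ?_
  exact integral_add (hf.sub hg).abs (hg.sub hh).abs

lemma measure_inter_le_cond [IsProbabilityMeasure μ] {s : Set Ω} (hs : MeasurableSet s)
    (t : Set Ω) : μ (s ∩ t) ≤ cond μ s t := by
  rw [← cond_mul_eq_inter hs t μ]
  exact mul_le_of_le_one_right' prob_le_one

end

lemma integral_abs_cprob_sub_cprob_le {Ω : Type*} {m m0 : MeasurableSpace Ω} {μ : Measure[m0] Ω}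
    [IsFiniteMeasure μ] {S A : Set Ω} (hS : MeasurableSet[m0] S) (hA : MeasurableSet[m0] A) :
    ∫ ω, |cprob μ m S ω - cprob μ m A ω| ∂μ ≤ μ.real (S ∆ A) := by
  set one : Ω → ℝ := fun _ => 1
  have hsub : cprob μ m S - cprob μ m A =ᵐ[μ] μ[S.indicator one - A.indicator one | m] :=
    (condExp_sub ((integrable_const 1).indicator hS) ((integrable_const 1).indicator hA) m).symm
  calc ∫ ω, |cprob μ m S ω - cprob μ m A ω| ∂μ
      = ∫ ω, |μ[S.indicator one - A.indicator one | m] ω| ∂μ :=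
        integral_congr_ae (hsub.mono fun ω h => congrArg abs h)
    _ ≤ ∫ ω, |S.indicator one ω - A.indicator one ω| ∂μ := integral_abs_condExp_le _
    _ = ∫ ω, (S ∆ A).indicator one ω ∂μ := by
        congr with ω
        rw [← Set.abs_indicator_symmDiff, abs_of_nonneg (Set.indicator_nonneg (by simp [one]) ω)]
    _ = μ.real (S ∆ A) := integral_indicator_one (hS.symmDiff hA)

theorem ece_end_to_end_bound_general
    {Ω : Type*} [MeasurableSpace Ω] (μ : Measure Ω) [IsProbabilityMeasure μ]
    (S A : Set Ω) (hS : MeasurableSet S) (hA : MeasurableSet A)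
    (MC : Ω → ℝ) (hMC : Measurable MC) (hMCr : ∀ ω, MC ω ∈ Set.Icc (0 : ℝ) 1)
    (e1 e2 e3 : ℝ)
    (hsuff : μ (A ∩ Sᶜ) = 0)
    (hrel : (ProbabilityTheory.cond μ Aᶜ S).toReal ≤ e1 + e2)
    (hECE : ∫ ω, |cprob μ (sigGen MC) A ω - MC ω| ∂μ ≤ e3) :
    ∫ ω, |cprob μ (sigGen MC) S ω - MC ω| ∂μ ≤ e1 + e2 + e3 := by
  have hMCi : Integrable MC μ :=
    .of_bound hMC.aestronglyMeasurable 1 <| ae_of_all _ fun ω => by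
      rw [Real.norm_eq_abs, abs_le]
      constructor <;> linarith [(hMCr ω).1, (hMCr ω).2]
  have hSA : μ.real (S ∆ A) ≤ e1 + e2 :=
    calc μ.real (S ∆ A) = μ.real (Aᶜ ∩ S) := by
          rw [measureReal_symmDiff_eq hS hA, Set.sdiff_eq A, (measureReal_eq_zero_iff (by finiteness)).2 hsuff,
            add_zero, Set.sdiff_eq, Set.inter_comm]
      _ ≤ (cond μ Aᶜ S).toReal :=
          ENNReal.toReal_mono (by finiteness) (measure_inter_le_cond hA.compl S)
      _ ≤ e1 + e2 := hrel
  calc ∫ ω, |cprob μ (sigGen MC) S ω - MC ω| ∂μ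
      ≤ ∫ ω, |cprob μ (sigGen MC) S ω - cprob μ (sigGen MC) A ω| ∂μ
        + ∫ ω, |cprob μ (sigGen MC) A ω - MC ω| ∂μ :=
        integral_abs_sub_le_integral_abs_sub_add integrable_condExp integrable_condExp hMCi
    _ ≤ e1 + e2 + e3 := add_le_add ((integral_abs_cprob_sub_cprob_le hS hA).trans hSA) hECE

/-- Theorem 4.6 (End-to-end bound on ECE): if the assumption `A` is sufficient for safety `S`
(`P(A ∩ Sᶜ) = 0`), the safety chance under violated assumptions is bounded
(`P(S | Aᶜ) ≤ e1 + e2`), and `ECE(M_C, A) ≤ e3`, then `ECE(M_C, S) ≤ e1 + e2 + e3`. -/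
theorem ece_end_to_end_bound
    {Ω : Type*} [MeasurableSpace Ω] (μ : Measure Ω) [IsProbabilityMeasure μ]
    (S A : Set Ω) (hS : MeasurableSet S) (hA : MeasurableSet A)
    (MC : Ω → ℝ) (hMC : Measurable MC) (hMCr : ∀ ω, MC ω ∈ Set.Icc (0 : ℝ) 1)
    (e1 e2 e3 : ℝ) (he1 : 0 ≤ e1) (he2 : 0 ≤ e2) (he3 : 0 ≤ e3)
    (hsuff : μ (A ∩ Sᶜ) = 0)
    (hAc : 0 < μ Aᶜ)
    (hrel : (ProbabilityTheory.cond μ Aᶜ S).toReal ≤ e1 + e2)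
    (hECE : ∫ ω, |cprob μ (sigGen MC) A ω - MC ω| ∂μ ≤ e3) :
    ∫ ω, |cprob μ (sigGen MC) S ω - MC ω| ∂μ ≤ e1 + e2 + e3 :=
  ece_end_to_end_bound_general μ S A hS hA MC hMC hMCr e1 e2 e3 hsuff hrel hECE
end

section
/- For all e1, e2 ∈ [0,1] and all x ∈ [0,1], the quantity x − max(0, x − e1)·max(0, x − e2) is at most (e1² − 2·e1·(e2 − 1) + (1 + e2)²)/4 if e1 + e2 ≤ 1, and at most e1 + e2 − e1·e2 otherwise. -/
/-- Elementary fact: for `e1, e2, x ∈ [0,1]`, the quantity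
`x − max(0, x − e1)·max(0, x − e2)` is at most `(e1² − 2·e1·(e2 − 1) + (1 + e2)²)/4`
if `e1 + e2 ≤ 1`, and at most `e1 + e2 − e1·e2` otherwise. -/
theorem conservatism_pointwise_bound (e1 e2 x : ℝ)
    (he1 : e1 ∈ Set.Icc (0 : ℝ) 1) (he2 : e2 ∈ Set.Icc (0 : ℝ) 1)
    (hx : x ∈ Set.Icc (0 : ℝ) 1) :
    x - max 0 (x - e1) * max 0 (x - e2) ≤
      if e1 + e2 ≤ 1 then (e1 ^ 2 - 2 * e1 * (e2 - 1) + (1 + e2) ^ 2) / 4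
      else e1 + e2 - e1 * e2 := by
  obtain ⟨h1, h1'⟩ := he1
  obtain ⟨h2, h2'⟩ := he2
  obtain ⟨hx0, hx1⟩ := hx
  split_ifs with h
  · rcases le_or_gt x e1 with ha | ha <;> rcases le_or_gt x e2 with hb | hb
    · rw [max_eq_left (by linarith), max_eq_left (by linarith)]; nlinarith
    · rw [max_eq_left (by linarith), max_eq_right (by linarith)]; nlinarith
    · rw [max_eq_right (by linarith), max_eq_left (by linarith)]; nlinarith
    · rw [max_eq_right (by linarith), max_eq_right (by linarith)]
      nlinarith [sq_nonneg (2*x - e1 - e2 - 1)]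
  · rcases le_or_gt x e1 with ha | ha <;> rcases le_or_gt x e2 with hb | hb
    · rw [max_eq_left (by linarith), max_eq_left (by linarith)]; nlinarith
    · rw [max_eq_left (by linarith), max_eq_right (by linarith)]; nlinarith
    · rw [max_eq_right (by linarith), max_eq_left (by linarith)]; nlinarith
    · rw [max_eq_right (by linarith), max_eq_right (by linarith)]
      nlinarith [mul_nonneg (sub_nonneg.2 hx1) hx0]
end

section
/- Let S and A be events with P(A ∩ Sᶜ) = 0, and let 𝒢 be a sub-σ-algebra of ℱ. Then E[ |P(S | 𝒢) − P(A | 𝒢)| ] = P(S ∩ Aᶜ). In particular, for any random variable M_C, E[ |P(S | σ(M_C)) − P(A | σ(M_C))| ] = P(S ∩ Aᶜ). -/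
open MeasureTheory ProbabilityTheory
open scoped ENNReal

/-!
Up to the null set `A ∩ Sᶜ`, the indicator `1_S - 1_A` is the indicator of `S ∩ Aᶜ`, hence
nonnegative. Conditional expectation is linear and positive, so `P(S | 𝒢) - P(A | 𝒢)` is a.e.
`E[1_{S ∩ Aᶜ} | 𝒢] ≥ 0`: the absolute value can be dropped, and the tower property gives
`E[E[1_{S ∩ Aᶜ} | 𝒢]] = P(S ∩ Aᶜ)`.
-/

section

variable {Ω : Type*} {m m0 : MeasurableSpace Ω} {μ : Measure Ω}

theorem indicator_one_sub_indicator_one_ae_eq {S A : Set Ω} (h : μ (A ∩ Sᶜ) = 0) :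
    (S.indicator 1 - A.indicator 1 : Ω → ℝ) =ᵐ[μ] (S ∩ Aᶜ).indicator 1 := by
  filter_upwards [measure_eq_zero_iff_ae_notMem.mp h] with ω hω
  by_cases hS : ω ∈ S <;> by_cases hA : ω ∈ A <;> simp_all

theorem integral_abs_condExp_sub_condExp (hm : m ≤ m0) [SigmaFinite (μ.trim hm)]
    {f g : Ω → ℝ} (hf : Integrable f μ) (hg : Integrable g μ) (hfg : 0 ≤ᵐ[μ] g - f) :
    ∫ ω, |(μ[g | m]) ω - (μ[f | m]) ω| ∂μ = ∫ ω, (g - f) ω ∂μ := by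
  have hsub : μ[g | m] - μ[f | m] =ᵐ[μ] μ[g - f | m] := (condExp_sub hg hf m).symm
  have hnonneg : 0 ≤ᵐ[μ] μ[g - f | m] := condExp_nonneg hfg
  calc ∫ ω, |(μ[g | m]) ω - (μ[f | m]) ω| ∂μ = ∫ ω, (μ[g - f | m]) ω ∂μ := by
        refine integral_congr_ae ?_
        filter_upwards [hsub, hnonneg] with ω hω hω'
        rw [← Pi.sub_apply, hω, abs_of_nonneg hω']
    _ = ∫ ω, (g - f) ω ∂μ := integral_condExp hm

theorem integral_abs_cprob_sub_cprob [IsFiniteMeasure μ] (hm : m ≤ m0) {S A : Set Ω}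
    (hS : MeasurableSet S) (hA : MeasurableSet A) (h : μ (A ∩ Sᶜ) = 0) :
    ∫ ω, |cprob μ m S ω - cprob μ m A ω| ∂μ = μ.real (S ∩ Aᶜ) := by
  have hdiff := indicator_one_sub_indicator_one_ae_eq h
  calc ∫ ω, |cprob μ m S ω - cprob μ m A ω| ∂μ
      = ∫ ω, (S.indicator 1 - A.indicator 1 : Ω → ℝ) ω ∂μ := by
        refine integral_abs_condExp_sub_condExp hm ((integrable_const 1).indicator hA)
          ((integrable_const 1).indicator hS) ?_
        filter_upwards [hdiff] with ω hω
        exact hω ▸ Set.indicator_nonneg (fun _ _ => zero_le_one) ω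
    _ = ∫ ω, (S ∩ Aᶜ).indicator 1 ω ∂μ := integral_congr_ae hdiff
    _ = μ.real (S ∩ Aᶜ) := integral_indicator_one (hS.inter hA.compl)

end

/-- Key step of the end-to-end ECE bound: if `A` is sufficient for `S` (`P(A ∩ Sᶜ) = 0`),
then for any sub-sigma-algebra `𝒢`, `E[|P(S | 𝒢) − P(A | 𝒢)|] = P(S ∩ Aᶜ)`; in particular
this holds for `𝒢 = σ(M_C)` for any (measurable) random variable `M_C`. -/
theorem condexp_diff_integral_eq
    {Ω : Type*} [m0 : MeasurableSpace Ω] (μ : Measure Ω) [IsProbabilityMeasure μ]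
    (S A : Set Ω) (hS : MeasurableSet S) (hA : MeasurableSet A)
    (hsuff : μ (A ∩ Sᶜ) = 0) :
    (∀ m : MeasurableSpace Ω, m ≤ m0 →
      ∫ ω, |@cprob Ω m0 μ m S ω - @cprob Ω m0 μ m A ω| ∂μ = (μ (S ∩ Aᶜ)).toReal) ∧
    (∀ MC : Ω → ℝ, Measurable MC →
      ∫ ω, |cprob μ (sigGen MC) S ω - cprob μ (sigGen MC) A ω| ∂μ = (μ (S ∩ Aᶜ)).toReal) :=
  ⟨fun _ hm => integral_abs_cprob_sub_cprob hm hS hA hsuff,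
    fun _ hMC => integral_abs_cprob_sub_cprob hMC.comap_le hS hA hsuff⟩
end

section
/- Let M1 and M_C be random variables with values in [0,1] such that M_C ≤ M1 almost surely, let A1 be an event and e1 ≥ 0. If MCE(M1, A1) ≤ e1 and the conditional independence A1 ⟂ M_C | M1 holds, then P(A1 | σ(M_C)) ≥ M_C − e1 almost surely, and hence P(A1 | σ(M_C)) ≥ max(0, M_C − e1) almost surely. -/
open MeasureTheory ProbabilityTheory
open scoped ENNReal

/-- Per-monitor step of the conservatism bound for the product composition: if `M_C ≤ M1`
a.s., `MCE(M1, A1) ≤ e1`, and `A1 ⟂ M_C | M1`, then `P(A1 | σ(M_C)) ≥ M_C − e1` a.s., hence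
`P(A1 | σ(M_C)) ≥ max(0, M_C − e1)` a.s. -/
theorem conservatism_per_monitor_bound
    {Ω : Type*} [MeasurableSpace Ω] (μ : Measure Ω) [IsProbabilityMeasure μ]
    (M1 MC : Ω → ℝ) (hM1 : Measurable M1) (hMC : Measurable MC)
    (hM1r : ∀ ω, M1 ω ∈ Set.Icc (0 : ℝ) 1) (hMCr : ∀ ω, MC ω ∈ Set.Icc (0 : ℝ) 1)
    (hle : ∀ᵐ ω ∂μ, MC ω ≤ M1 ω)
    (A1 : Set Ω) (hA1 : MeasurableSet A1) (e1 : ℝ) (he1 : 0 ≤ e1)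
    (hMCE : ∀ᵐ ω ∂μ, |cprob μ (sigGen M1) A1 ω - M1 ω| ≤ e1)
    (hCI : cprob μ (sigGen (fun ω => (M1 ω, MC ω))) A1 =ᵐ[μ] cprob μ (sigGen M1) A1) :
    (∀ᵐ ω ∂μ, MC ω - e1 ≤ cprob μ (sigGen MC) A1 ω) ∧
    (∀ᵐ ω ∂μ, max 0 (MC ω - e1) ≤ cprob μ (sigGen MC) A1 ω) := by
  -- setup
  have hpair : Measurable (fun ω => (M1 ω, MC ω)) := hM1.prodMk hMC
  have hm_le : sigGen (fun ω => (M1 ω, MC ω)) ≤ ‹MeasurableSpace Ω› := hpair.comap_le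
  have hmC_le_m : sigGen MC ≤ sigGen (fun ω => (M1 ω, MC ω)) := by
    rintro s ⟨t, ht, rfl⟩
    exact ⟨Set.univ ×ˢ t, MeasurableSet.univ.prod ht, by ext ω; simp⟩
  -- tower
  have h1 : μ[cprob μ (sigGen (fun ω => (M1 ω, MC ω))) A1 | sigGen MC]
      =ᵐ[μ] cprob μ (sigGen MC) A1 :=
    condExp_condExp_of_le hmC_le_m hm_le
  have h2 : μ[cprob μ (sigGen (fun ω => (M1 ω, MC ω))) A1 | sigGen MC]
      =ᵐ[μ] μ[cprob μ (sigGen M1) A1 | sigGen MC] := condExp_congr_ae hCI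
  -- pointwise bound
  have h3 : (fun ω => MC ω - e1) ≤ᵐ[μ] cprob μ (sigGen M1) A1 := by
    filter_upwards [hle, hMCE] with ω hω hM
    have := abs_le.mp hM
    linarith [this.1]
  -- integrabilities
  have hMCint : Integrable MC μ := by
    refine (integrable_const (1 : ℝ)).mono' hMC.aestronglyMeasurable ?_
    exact Filter.Eventually.of_forall fun ω =>
      abs_le.mpr ⟨le_trans (by norm_num) (hMCr ω).1, (hMCr ω).2⟩
  have hfint : Integrable (fun ω => MC ω - e1) μ := hMCint.sub (integrable_const e1)
  have h4 : μ[fun ω => MC ω - e1 | sigGen MC] ≤ᵐ[μ] μ[cprob μ (sigGen M1) A1 | sigGen MC] :=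
    condExp_mono hfint integrable_condExp h3
  have hMCsm : StronglyMeasurable[sigGen MC] (fun ω => MC ω - e1) := by
    have hm : Measurable[sigGen MC] MC := fun s hs => ⟨s, hs, rfl⟩
    exact (hm.sub (@measurable_const ℝ Ω _ (sigGen MC) e1)).stronglyMeasurable
  have h5 : μ[fun ω => MC ω - e1 | sigGen MC] =ᵐ[μ] (fun ω => MC ω - e1) :=
    Filter.EventuallyEq.of_eq (condExp_of_stronglyMeasurable (hmC_le_m.trans hm_le) hMCsm hfint)
  have hmain : ∀ᵐ ω ∂μ, MC ω - e1 ≤ cprob μ (sigGen MC) A1 ω := by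
    filter_upwards [h1, h2, h4, h5] with ω e1' e2' le' e5'
    calc MC ω - e1 = (μ[fun ω => MC ω - e1 | sigGen MC]) ω := e5'.symm
      _ ≤ (μ[cprob μ (sigGen M1) A1 | sigGen MC]) ω := le'
      _ = (μ[cprob μ (sigGen (fun ω => (M1 ω, MC ω))) A1 | sigGen MC]) ω := e2'.symm
      _ = cprob μ (sigGen MC) A1 ω := e1'
  have hnn : ∀ᵐ ω ∂μ, 0 ≤ cprob μ (sigGen MC) A1 ω :=
    condExp_nonneg (Filter.Eventually.of_forall fun ω =>
      Set.indicator_nonneg (fun _ _ => zero_le_one) ω)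
  refine ⟨hmain, ?_⟩
  filter_upwards [hmain, hnn] with ω h h0
  exact max_le h0 h
end
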